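/- arXiv:0801.0963 — 4 statements merged into one kernel-verified Lean document; each statement's English description precedes it below -/
import Mathlib

section
/- The sum over k from 3 to n−1 of the expected number of intervals of length k in a uniformly random permutation of length n tends to 0 as n → ∞. Consequently, the expected total number of proper intervals (of lengths 2 through n−1) tends to 2. -/
def Contig {n : ℕ} (s : Finset (Fin n)) : Prop := ∃ a b : Fin n, s = Finset.Icc a b

def IsPInterval {n : ℕ} (π : Equiv.Perm (Fin n)) (s : Finset (Fin n)) : Prop :=
  Contig s ∧ Contig (s.image π)

/-- The expected number of intervals of length `k` in a uniformly random
permutation of length `n`. -/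
noncomputable def EX (n k : ℕ) : ℝ :=
  (∑ π : Equiv.Perm (Fin n),
    ({s : Finset (Fin n) | IsPInterval π s ∧ s.card = k}.ncard : ℝ)) / (n.factorial : ℝ)


/-!
Double counting over pairs `(s, t)` of intervals of length `k` gives
`E[X_k] = (n - k + 1)² / C(n, k)`: the permutations `π` with `π(s) = t` form one of `C(n, k)`
equally large classes, one for each possible image of `s`. For `3 ≤ k ≤ n - 1` the terms with
`k ∈ {3, 4}` or `k ≥ n - 4` are `O(1/n)` each, and the remaining `O(n)` terms are `O(1/n³)`
because `C(n, k) ≥ C(n, 5)` there; so their sum tends to `0`. The term `k = 2` is `2 - 2/n`.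
-/

open Finset Filter Topology Equiv
open scoped Nat

section PermImage

variable {α : Type*} [Fintype α] [DecidableEq α]

lemma card_perms_image_eq_of_card_eq (s : Finset α) {t u : Finset α} (h : #t = #u) :
    #{π : Perm α | s.image π = t} = #{π : Perm α | s.image π = u} := by
  obtain ⟨σ, hσ⟩ := Perm.exists_map_finset_eq t u h
  rw [map_eq_image] at hσ
  refine card_nbij' (σ * ·) (σ⁻¹ * ·) (fun π hπ => ?_) (fun π hπ => ?_)
    (fun π _ => by simp) (fun π _ => by simp)
  · simp only [coe_filter, mem_univ, true_and, Set.mem_ofPred_eq] at hπ ⊢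
    rw [Perm.coe_mul, ← image_image, hπ, ← hσ]
    rfl
  · simp only [coe_filter, mem_univ, true_and, Set.mem_ofPred_eq] at hπ ⊢
    rw [Perm.coe_mul, ← image_image, hπ, ← hσ]
    simp [image_image]

lemma card_perms_image_mul_choose (s t : Finset α) (h : #s = #t) :
    #{π : Perm α | s.image π = t} * (Fintype.card α).choose #s = (Fintype.card α)! := by
  have hfib := card_eq_sum_card_fiberwise (s := (univ : Finset (Perm α)))
    (t := powersetCard #s univ) (f := fun π : Perm α => s.image π)
    (fun π _ => by simp [mem_powersetCard, card_image_of_injective _ π.injective])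
  rw [card_univ, Fintype.card_perm, sum_congr rfl (fun u hu =>
      card_perms_image_eq_of_card_eq s (u := t) ((mem_powersetCard.1 hu).2.trans h)),
    sum_const, card_powersetCard, card_univ, smul_eq_mul] at hfib
  rw [hfib, mul_comm]

end PermImage

section Intervals

open scoped Classical

variable {n k : ℕ}

lemma contig_and_card_eq_iff (hk : 0 < k) {s : Finset (Fin n)} :
    Contig s ∧ #s = k ↔
      ∃ i, i + k ≤ n ∧ s = ({x | i ≤ (x : ℕ) ∧ (x : ℕ) < i + k} : Finset (Fin n)) := by
  constructor
  · rintro ⟨⟨a, b, rfl⟩, hcard⟩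
    rw [Fin.card_Icc] at hcard
    refine ⟨a, by omega, ?_⟩
    ext x
    simp only [mem_Icc, mem_filter, mem_univ, true_and, Fin.le_def]
    omega
  · rintro ⟨i, hi, rfl⟩
    have hs : ({x | i ≤ (x : ℕ) ∧ (x : ℕ) < i + k} : Finset (Fin n)) =
        Icc ⟨i, by omega⟩ ⟨i + k - 1, by omega⟩ := by
      ext x
      simp only [mem_Icc, mem_filter, mem_univ, true_and, Fin.le_def]
      omega
    rw [hs, Fin.card_Icc]
    exact ⟨⟨_, _, rfl⟩, by simp only; omega⟩

noncomputable def contigOfCard (n k : ℕ) : Finset (Finset (Fin n)) := {s | Contig s ∧ #s = k}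

lemma mem_contigOfCard {s : Finset (Fin n)} : s ∈ contigOfCard n k ↔ Contig s ∧ #s = k := by
  simp [contigOfCard]

lemma card_contigOfCard (hk : 0 < k) : #(contigOfCard n k) = n + 1 - k := by
  set w : ℕ → Finset (Fin n) := fun i => ({x | i ≤ (x : ℕ) ∧ (x : ℕ) < i + k} : Finset (Fin n))
  have hw : contigOfCard n k = (range (n + 1 - k)).image w := by
    ext s
    simp only [mem_contigOfCard, mem_image, mem_range, contig_and_card_eq_iff hk]
    constructor <;> rintro ⟨i, hi, rfl⟩ <;> exact ⟨i, by omega, rfl⟩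
  have hle : ∀ i j, i < n + 1 - k → w i = w j → j ≤ i := by
    intro i j hi hij
    have : (⟨i, by omega⟩ : Fin n) ∈ w j := hij ▸ by simp [w]; omega
    simp only [w, mem_filter] at this
    exact this.2.1
  rw [hw, card_image_of_injOn, card_range]
  intro i hi j hj hij
  exact le_antisymm (hle j i (mem_range.1 hj) hij.symm) (hle i j (mem_range.1 hi) hij)

lemma sum_card_intervals_eq :
    ∑ π : Perm (Fin n), #{s | IsPInterval π s ∧ #s = k} =
      ∑ s ∈ contigOfCard n k, ∑ t ∈ contigOfCard n k, #{π : Perm (Fin n) | s.image π = t} := by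
  have hπ : ∀ π : Perm (Fin n), #{s | IsPInterval π s ∧ #s = k} =
      ∑ s ∈ contigOfCard n k, ∑ t ∈ contigOfCard n k, if s.image π = t then 1 else 0 := by
    intro π
    simp_rw [sum_ite_eq, ← card_filter]
    congr 1
    ext s
    simp only [mem_filter, mem_univ, true_and, mem_contigOfCard,
      card_image_of_injective _ π.injective]
    unfold IsPInterval
    tauto
  simp_rw [hπ, card_filter]
  rw [sum_comm]
  exact sum_congr rfl fun s _ => sum_comm

theorem EX_eq_sq_div_choose (hk : 0 < k) (hkn : k ≤ n) :
    EX n k = ((n + 1 - k : ℕ) : ℝ) ^ 2 / n.choose k := by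
  have hcount : (∑ π : Perm (Fin n), #{s | IsPInterval π s ∧ #s = k}) * n.choose k =
      (n + 1 - k) ^ 2 * n ! :=
    calc _ = ∑ s ∈ contigOfCard n k, ∑ t ∈ contigOfCard n k,
          #{π : Perm (Fin n) | s.image π = t} * n.choose k := by
          simp_rw [sum_card_intervals_eq, sum_mul]
      _ = ∑ s ∈ contigOfCard n k, ∑ t ∈ contigOfCard n k, n ! :=
          sum_congr rfl fun s hs => sum_congr rfl fun t ht => by
            have hs' := (mem_contigOfCard.1 hs).2
            simpa [hs'] using
              card_perms_image_mul_choose s t (hs'.trans (mem_contigOfCard.1 ht).2.symm)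
      _ = _ := by simp [card_contigOfCard hk, sq, mul_assoc]
  unfold EX
  simp_rw [← coe_filter_univ, Set.ncard_coe_finset]
  rw [div_eq_div_iff (by positivity) (by exact_mod_cast (Nat.choose_pos hkn).ne')]
  exact_mod_cast hcount

end Intervals

section Asymptotics

variable {n k r : ℕ}

lemma Nat.choose_le_choose_of_le_of_two_mul_le (hrk : r ≤ k) (hk : 2 * k ≤ n) :
    n.choose r ≤ n.choose k := by
  induction k, hrk using Nat.le_induction with
  | base => rfl
  | succ k _ ih => exact (ih (by omega)).trans (Nat.choose_le_succ_of_lt_half_left (by omega))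

lemma Nat.choose_le_choose_of_le_of_le_sub (hrk : r ≤ k) (hk : k ≤ n - r) :
    n.choose r ≤ n.choose k := by
  rcases le_total (2 * k) n with h | h
  · exact Nat.choose_le_choose_of_le_of_two_mul_le hrk h
  · rw [← Nat.choose_symm (by omega : k ≤ n)]
    exact Nat.choose_le_choose_of_le_of_two_mul_le (by omega) (by omega)

lemma EX_nonneg (n k : ℕ) : 0 ≤ EX n k := by
  unfold EX
  positivity

lemma EX_le_of_le_of_le_sub (hr : 0 < r) (hrk : r ≤ k) (hk : k ≤ n - r) :
    EX n k ≤ 2 ^ r * r ! * ((n + 1 - k : ℕ) : ℝ) ^ 2 / n ^ r := by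
  rw [EX_eq_sq_div_choose (by omega) (by omega)]
  have hchoose : ((n + 1 - r : ℕ) : ℝ) ^ r ≤ r ! * n.choose k := by
    rw [← div_le_iff₀' (by positivity)]
    exact (Nat.pow_le_choose r n).trans
      (by exact_mod_cast Nat.choose_le_choose_of_le_of_le_sub hrk hk)
  have hhalf : (n : ℝ) ≤ 2 * (n + 1 - r : ℕ) := by exact_mod_cast (by omega : n ≤ 2 * (n + 1 - r))
  have hpow : (n : ℝ) ^ r ≤ 2 ^ r * r ! * n.choose k :=
    calc (n : ℝ) ^ r ≤ (2 * (n + 1 - r : ℕ)) ^ r := by gcongr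
      _ = 2 ^ r * ((n + 1 - r : ℕ) : ℝ) ^ r := mul_pow _ _ _
      _ ≤ 2 ^ r * (r ! * n.choose k) := by gcongr
      _ = 2 ^ r * r ! * n.choose k := (mul_assoc _ _ _).symm
  rw [div_le_div_iff₀ (by exact_mod_cast Nat.choose_pos (by omega)) (by
      exact_mod_cast pow_pos (by omega : 0 < n) r), mul_comm (2 ^ r * r ! : ℝ), mul_assoc]
  exact mul_le_mul_of_nonneg_left hpow (by positivity)

lemma sum_EX_Icc_three_le (hn : 10 ≤ n) : ∑ k ∈ Icc 3 (n - 1), EX n k ≤ 5000 / n := by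
  have low : ∀ k ∈ Ico 3 5, EX n k ≤ 48 / n := by
    intro k hk
    rw [mem_Ico] at hk
    calc EX n k ≤ 2 ^ 3 * 3 ! * ((n + 1 - k : ℕ) : ℝ) ^ 2 / n ^ 3 :=
          EX_le_of_le_of_le_sub (by norm_num) hk.1 (by omega)
      _ ≤ 2 ^ 3 * 3 ! * (n : ℝ) ^ 2 / n ^ 3 := by gcongr; omega
      _ = 48 / n := by field_simp; norm_num [Nat.factorial]
  have mid : ∀ k ∈ Ico 5 (n - 4), EX n k ≤ 3840 / n ^ 3 := by
    intro k hk
    rw [mem_Ico] at hk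
    calc EX n k ≤ 2 ^ 5 * 5 ! * ((n + 1 - k : ℕ) : ℝ) ^ 2 / n ^ 5 :=
          EX_le_of_le_of_le_sub (by norm_num) hk.1 (by omega)
      _ ≤ 2 ^ 5 * 5 ! * (n : ℝ) ^ 2 / n ^ 5 := by gcongr; omega
      _ = 3840 / n ^ 3 := by field_simp; norm_num [Nat.factorial]
  have high : ∀ k ∈ Ico (n - 4) n, EX n k ≤ 50 / n := by
    intro k hk
    rw [mem_Ico] at hk
    calc EX n k ≤ 2 ^ 1 * 1 ! * ((n + 1 - k : ℕ) : ℝ) ^ 2 / n ^ 1 :=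
          EX_le_of_le_of_le_sub (by norm_num) (by omega) (by omega)
      _ ≤ 2 ^ 1 * 1 ! * (5 : ℝ) ^ 2 / n ^ 1 := by
          gcongr; exact_mod_cast (by omega : n + 1 - k ≤ 5)
      _ = 50 / n := by norm_num
  have hlow : ∑ k ∈ Ico 3 5, EX n k ≤ 2 * (48 / n) :=
    (sum_le_card_nsmul _ _ _ low).trans_eq (by norm_num)
  have hmid : ∑ k ∈ Ico 5 (n - 4), EX n k ≤ 3840 / n :=
    calc ∑ k ∈ Ico 5 (n - 4), EX n k ≤ (n - 4 - 5) • (3840 / (n : ℝ) ^ 3) := by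
          simpa using sum_le_card_nsmul _ _ _ mid
      _ ≤ (n * n : ℕ) • (3840 / (n : ℝ) ^ 3) := by
          gcongr
          have := Nat.le_mul_self n
          omega
      _ = 3840 / n := by
          rw [nsmul_eq_mul]
          push_cast
          field_simp
  have hhigh : ∑ k ∈ Ico (n - 4) n, EX n k ≤ 4 * (50 / n) :=
    (sum_le_card_nsmul _ _ _ high).trans_eq (by
      rw [Nat.card_Ico, show n - (n - 4) = 4 by omega, nsmul_eq_mul]
      norm_num)
  have hIcc : Icc 3 (n - 1) = Ico 3 n := by
    ext
    simp only [mem_Icc, mem_Ico]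
    omega
  calc ∑ k ∈ Icc 3 (n - 1), EX n k
      = ∑ k ∈ Ico 3 5, EX n k + ∑ k ∈ Ico 5 (n - 4), EX n k + ∑ k ∈ Ico (n - 4) n, EX n k := by
        rw [hIcc, sum_Ico_consecutive _ (by omega : 3 ≤ 5) (by omega : 5 ≤ n - 4),
          sum_Ico_consecutive _ (by omega : 3 ≤ n - 4) (by omega : n - 4 ≤ n)]
    _ ≤ 2 * (48 / n) + 3840 / n + 4 * (50 / n) := by gcongr
    _ ≤ 5000 / n := by
        field_simp
        norm_num

lemma EX_two (hn : 2 ≤ n) : EX n 2 = 2 - 2 / n := by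
  rw [EX_eq_sq_div_choose (by norm_num) hn, Nat.cast_choose_two, Nat.cast_sub (by omega)]
  have hn1 : (n : ℝ) - 1 ≠ 0 := by
    have : (2 : ℝ) ≤ n := by exact_mod_cast hn
    linarith
  field_simp
  push_cast
  ring

end Asymptotics

/-- The sum over `3 ≤ k ≤ n-1` of the expected numbers of intervals of length `k`
tends to 0; consequently the expected total number of proper intervals
(lengths 2 through n-1) tends to 2. -/
theorem stmt9 :
    Filter.Tendsto (fun n : ℕ => ∑ k ∈ Finset.Icc 3 (n - 1), EX n k)
      Filter.atTop (nhds 0) ∧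
    Filter.Tendsto (fun n : ℕ => ∑ k ∈ Finset.Icc 2 (n - 1), EX n k)
      Filter.atTop (nhds 2) := by
  have htail : Tendsto (fun n : ℕ => ∑ k ∈ Icc 3 (n - 1), EX n k) atTop (𝓝 0) :=
    squeeze_zero' (.of_forall fun n => sum_nonneg fun k _ => EX_nonneg n k)
      (eventually_atTop.2 ⟨10, fun n hn => sum_EX_Icc_three_le hn⟩)
      (tendsto_const_div_atTop_nhds_zero_nat 5000)
  have htwo : Tendsto (fun n : ℕ => EX n 2) atTop (𝓝 2) := by
    have h := tendsto_const_nhds (x := (2 : ℝ)).sub (tendsto_const_div_atTop_nhds_zero_nat 2)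
    rw [sub_zero] at h
    exact h.congr' (eventually_atTop.2 ⟨2, fun n hn => (EX_two hn).symm⟩)
  refine ⟨htail, ?_⟩
  rw [← add_zero (2 : ℝ)]
  refine (htwo.add htail).congr' (eventually_atTop.2 ⟨3, fun n hn => ?_⟩)
  dsimp only
  rw [← insert_Icc_add_one_left_eq_Icc (by omega : 2 ≤ n - 1), sum_insert (by simp)]
  rfl
end

section
/- For 4 ≤ k ≤ n−2, the expected number of intervals of length k in a uniformly random permutation of length n satisfies E[X_k] ≤ 24/n². -/
/-!
Double counting over pairs of contiguous sets: `n! · E[X_k]` is the number of pairs `(π, s)` with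
`s` and `π • s` both contiguous of size `k`. There are at most `n - k + 1` contiguous `k`-sets, and
for fixed `s`, `t` the permutations with `π • s = t` form a coset of the stabilizer of `s`, which has
`k! (n - k)!` elements. Hence `E[X_k] ≤ (n - k + 1)² k! (n - k)! / n!`, and with `m = n - k` the
bound `24 / n²` becomes `n² (m + 1)² m! ≤ 24 n (n - 1) ⋯ (n - m + 1)`. For `m ≥ 4` this follows
by splitting off the first four factors, `n (n - 1) (n - 2) (n - 3) ≥ n² (n - 3)² ≥ n² (m + 1)²`,
and bounding the rest from below by `m! / 4!`; `m = 2, 3` are checked directly.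
-/

open Finset Equiv Nat
open scoped Pointwise Classical

section PermCount

variable {α : Type*} [Fintype α] [DecidableEq α]

lemma card_stabilizer_finset (s : Finset α) :
    Nat.card (MulAction.stabilizer (Perm α) s) = (#s)! * (Fintype.card α - #s)! := by
  let f : α → Bool := fun a => decide (a ∈ s)
  have hstab : ∀ g : Perm α, g ∈ MulAction.stabilizer (Perm α) s ↔ f ∘ g = f := by
    intro g
    rw [MulAction.mem_stabilizer_finset]
    simp [funext_iff, f]
  rw [Nat.card_congr (Equiv.subtypeEquivRight hstab), Nat.card_eq_fintype_card,
    DomMulAct.stabilizer_card, Fintype.prod_bool]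
  simp only [f, decide_eq_true_eq, decide_eq_false_iff_not, Fintype.card_subtype_compl,
    Fintype.card_coe]

lemma card_filter_smul_finset_eq_le (s t : Finset α) :
    #{π : Perm α | π • s = t} ≤ (#s)! * (Fintype.card α - #s)! := by
  rcases eq_empty_or_nonempty {π : Perm α | π • s = t} with h | ⟨π₀, hπ₀⟩
  · simp [h]
  rw [mem_filter] at hπ₀
  set H := MulAction.stabilizer (Perm α) s
  calc #{π : Perm α | π • s = t}
      ≤ #(({g | g ∈ H} : Finset (Perm α)).image (π₀ * ·)) := by
        refine card_le_card fun π hπ => ?_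
        rw [mem_filter] at hπ
        refine mem_image.2 ⟨π₀⁻¹ * π, ?_, mul_inv_cancel_left π₀ π⟩
        rw [mem_filter, MulAction.mem_stabilizer_iff, mul_smul, hπ.2, ← hπ₀.2, inv_smul_smul]
        exact ⟨mem_univ _, rfl⟩
    _ ≤ #({g | g ∈ H} : Finset (Perm α)) := card_image_le
    _ = (#s)! * (Fintype.card α - #s)! := by
        rw [← card_stabilizer_finset, Nat.card_eq_fintype_card, Fintype.card_subtype]

lemma sum_card_filter_smul_mem_le {k : ℕ} (C : Finset (Finset α)) (hC : ∀ s ∈ C, #s = k) :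
    ∑ π : Perm α, #{s ∈ C | π • s ∈ C} ≤ #C ^ 2 * (k ! * (Fintype.card α - k)!) := by
  calc ∑ π : Perm α, #{s ∈ C | π • s ∈ C}
      = ∑ s ∈ C, #{π : Perm α | π • s ∈ C} := by
        simp only [card_filter]
        exact sum_comm
    _ = ∑ s ∈ C, ∑ t ∈ C, #{π ∈ {π : Perm α | π • s ∈ C} | π • s = t} :=
        sum_congr rfl fun s _ => card_eq_sum_card_fiberwise fun π hπ => (mem_filter.1 hπ).2
    _ ≤ ∑ s ∈ C, ∑ t ∈ C, k ! * (Fintype.card α - k)! := by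
        gcongr with s hs t
        rw [← hC s hs]
        exact (card_le_card (filter_subset_filter _ (subset_univ _))).trans
          (card_filter_smul_finset_eq_le s t)
    _ = #C ^ 2 * (k ! * (Fintype.card α - k)!) := by
        simp only [sum_const, smul_eq_mul, sq, mul_assoc]

end PermCount

lemma card_filter_contig_le (n k : ℕ) (hk : 0 < k) :
    #{s : Finset (Fin n) | Contig s ∧ #s = k} ≤ n - k + 1 := by
  calc #{s : Finset (Fin n) | Contig s ∧ #s = k}
      ≤ #((range (n - k + 1)).image
          fun i => ({x : Fin n | i ≤ (x : ℕ) ∧ (x : ℕ) < i + k} : Finset _)) := by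
        refine card_le_card fun s hs => ?_
        obtain ⟨⟨a, b, rfl⟩, hcard⟩ := by simpa using hs
        rw [Fin.card_Icc] at hcard
        refine mem_image.2 ⟨a, mem_range.2 (by omega), ?_⟩
        ext x
        simp only [mem_filter, mem_univ, true_and, mem_Icc, Fin.le_def]
        omega
    _ ≤ n - k + 1 := card_image_le.trans (card_range _).le

lemma sq_mul_sq_le_descFactorial_four {n m : ℕ} (h : m + 4 ≤ n) :
    n ^ 2 * (m + 1) ^ 2 ≤ n.descFactorial 4 := by
  obtain ⟨r, rfl⟩ : ∃ r, n = r + 4 := ⟨n - 4, by omega⟩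
  have hm : (m + 1) ^ 2 ≤ (r + 1) ^ 2 := Nat.pow_le_pow_left (by omega) 2
  simp only [descFactorial_succ, descFactorial_zero, Nat.reduceSubDiff, Nat.sub_zero, mul_one]
  calc (r + 4) ^ 2 * (m + 1) ^ 2 ≤ (r + 4) ^ 2 * (r + 1) ^ 2 := Nat.mul_le_mul_left _ hm
    _ ≤ (r + 1) * ((r + 2) * ((r + 3) * (r + 4))) := by nlinarith

lemma factorial_le_24_mul_descFactorial {n m : ℕ} (hm : 4 ≤ m) (h : m + 4 ≤ n) :
    m ! ≤ 24 * (n - 4).descFactorial (m - 4) := by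
  have := factorial_mul_descFactorial (show m - 4 ≤ m by omega)
  rw [show m - (m - 4) = 4 by omega] at this
  rw [← this]
  exact Nat.mul_le_mul_left _ (descFactorial_le _ (by omega))

lemma sq_mul_sq_mul_factorial_le {n m : ℕ} (hm : 2 ≤ m) (h : m + 4 ≤ n) :
    n ^ 2 * (m + 1) ^ 2 * m ! ≤ 24 * n.descFactorial m := by
  obtain rfl | rfl | hm4 : m = 2 ∨ m = 3 ∨ 4 ≤ m := by omega
  · obtain ⟨r, rfl⟩ : ∃ r, n = r + 6 := ⟨n - 6, by omega⟩
    simp only [factorial, descFactorial_succ, descFactorial_zero, reduceSubDiff]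
    nlinarith
  · obtain ⟨r, rfl⟩ : ∃ r, n = r + 7 := ⟨n - 7, by omega⟩
    simp only [factorial, descFactorial_succ, descFactorial_zero, reduceSubDiff]
    nlinarith
  · calc n ^ 2 * (m + 1) ^ 2 * m ! ≤ n.descFactorial 4 * (24 * (n - 4).descFactorial (m - 4)) :=
          Nat.mul_le_mul (sq_mul_sq_le_descFactorial_four h) (factorial_le_24_mul_descFactorial hm4 h)
      _ = 24 * n.descFactorial m := by
          rw [← descFactorial_mul_descFactorial hm4]; ring

lemma sq_mul_sq_mul_factorial_mul_factorial_le {n k : ℕ} (h4 : 4 ≤ k) (hk : k + 2 ≤ n) :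
    n ^ 2 * ((n - k + 1) ^ 2 * (k ! * (n - k)!)) ≤ 24 * n ! := by
  have hfac := factorial_mul_descFactorial (show n - k ≤ n by omega)
  rw [show n - (n - k) = k by omega] at hfac
  calc n ^ 2 * ((n - k + 1) ^ 2 * (k ! * (n - k)!))
      = k ! * (n ^ 2 * (n - k + 1) ^ 2 * (n - k)!) := by ring
    _ ≤ k ! * (24 * n.descFactorial (n - k)) :=
        Nat.mul_le_mul_left _ (sq_mul_sq_mul_factorial_le (by omega) (by omega))
    _ = 24 * n ! := by rw [← hfac]; ring

lemma sum_card_isPInterval_le (n k : ℕ) (hk : 0 < k) :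
    ∑ π : Perm (Fin n), #{s | IsPInterval π s ∧ #s = k} ≤ (n - k + 1) ^ 2 * (k ! * (n - k)!) := by
  set C : Finset (Finset (Fin n)) := {s | Contig s ∧ #s = k}
  have hC : ∀ π : Perm (Fin n),
      ({s | IsPInterval π s ∧ #s = k} : Finset _) = {s ∈ C | π • s ∈ C} := by
    intro π
    ext s
    have hsmul : π • s = s.image π := rfl
    simp only [C, mem_filter, mem_univ, true_and]
    simp only [IsPInterval, ← hsmul, card_smul_finset]
    tauto
  simp_rw [hC]
  calc _ ≤ #C ^ 2 * (k ! * (Fintype.card (Fin n) - k)!) :=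
        sum_card_filter_smul_mem_le C fun s hs => (mem_filter.1 hs).2.2
    _ ≤ (n - k + 1) ^ 2 * (k ! * (n - k)!) := by
        rw [Fintype.card_fin]
        gcongr
        exact card_filter_contig_le n k hk

lemma EX_eq_sum_card_div (n k : ℕ) :
    EX n k = (∑ π : Perm (Fin n), #{s | IsPInterval π s ∧ #s = k} : ℕ) / (n ! : ℝ) := by
  simp [EX, Set.ncard_eq_toFinset_card']

/-- For `4 ≤ k ≤ n-2`, the expected number of intervals of length `k` in a uniformly
random permutation of length `n` is at most `24/n^2`. -/
theorem stmt10 (n k : ℕ) (h4 : 4 ≤ k) (hk : k ≤ n - 2) :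
    EX n k ≤ 24 / (n : ℝ)^2 := by
  have hn : k + 2 ≤ n := by omega
  have hn0 : (0 : ℝ) < n := by exact_mod_cast (show 0 < n by omega)
  rw [EX_eq_sum_card_div, div_le_div_iff₀ (by positivity) (by positivity)]
  exact_mod_cast calc
    (∑ π : Perm (Fin n), #{s | IsPInterval π s ∧ #s = k}) * n ^ 2
      ≤ (n - k + 1) ^ 2 * (k ! * (n - k)!) * n ^ 2 :=
        Nat.mul_le_mul_right _ (sum_card_isPInterval_le n k (by omega))
    _ = n ^ 2 * ((n - k + 1) ^ 2 * (k ! * (n - k)!)) := mul_comm _ _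
    _ ≤ 24 * n ! := sq_mul_sq_mul_factorial_mul_factorial_le h4 hn
end

section
/- For every m ≥ 2, every one-point deletion of the simple parallel alternation 2 4 6 ··· (2m) 1 3 5 ··· (2m−1) is order isomorphic to a non-simple permutation; i.e., this permutation is exceptional. -/
def IsSimplePerm {n : ℕ} (π : Equiv.Perm (Fin n)) : Prop :=
  ∀ s : Finset (Fin n), IsPInterval π s → s.card ≤ 1 ∨ s = Finset.univ

open Finset

section Intervals

variable {n : ℕ} {τ : Equiv.Perm (Fin n)}

lemma not_isSimplePerm_of_isPInterval {s : Finset (Fin n)} (hs : IsPInterval τ s)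
    (hcard : 2 ≤ s.card) (hne : s ≠ univ) : ¬ IsSimplePerm τ :=
  fun hτ => (hτ s hs).elim (by omega) hne

lemma Finset.Icc_eq_pair_of_covBy {α : Type*} [PartialOrder α] [LocallyFiniteOrder α]
    [DecidableEq α] {a b : α} (h : a ⋖ b) : Icc a b = {a, b} :=
  coe_injective (by push_cast; exact h.Icc_eq)

lemma not_isSimplePerm_of_covBy (hn : 3 ≤ n) {a b : Fin n} (hab : a ⋖ b) (hτ : τ a ⋖ τ b) :
    ¬ IsSimplePerm τ := by
  have hpair : ({a, b} : Finset (Fin n)).card = 2 := card_pair hab.ne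
  refine not_isSimplePerm_of_isPInterval (s := {a, b})
    ⟨⟨a, b, (Icc_eq_pair_of_covBy hab).symm⟩, ⟨τ a, τ b, ?_⟩⟩ hpair.ge fun h => ?_
  · rw [Icc_eq_pair_of_covBy hτ, image_insert, image_singleton]
  · rw [h, card_univ, Fintype.card_fin] at hpair
    omega

lemma contig_univ_erase (hn : 2 ≤ n) {x : Fin n} (hx : (x : ℕ) = 0 ∨ (x : ℕ) + 1 = n) :
    Contig (univ.erase x) := by
  refine hx.elim (fun hx => ⟨⟨1, by omega⟩, ⟨n - 1, by omega⟩, ?_⟩)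
    (fun hx => ⟨⟨0, by omega⟩, ⟨n - 2, by omega⟩, ?_⟩) <;>
  · ext y
    simp only [mem_erase, ne_eq, Fin.ext_iff, mem_univ, and_true, mem_Icc, Fin.le_def]
    omega

lemma not_isSimplePerm_of_end (hn : 3 ≤ n) {t : Fin n}
    (ht : (t : ℕ) = 0 ∨ (t : ℕ) + 1 = n) (hτt : (τ t : ℕ) = 0 ∨ (τ t : ℕ) + 1 = n) :
    ¬ IsSimplePerm τ := by
  have himage : (univ.erase t).image τ = univ.erase (τ t) := by
    rw [image_erase τ.injective, image_univ_of_surjective τ.surjective]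
  refine not_isSimplePerm_of_isPInterval
    ⟨contig_univ_erase (by omega) ht, himage ▸ contig_univ_erase (by omega) hτt⟩ ?_
    fun h => notMem_erase t univ (h.symm ▸ mem_univ t)
  rw [card_erase_of_mem (mem_univ t), card_univ, Fintype.card_fin]
  omega

end Intervals

section RelativeOrder

variable {n : ℕ} {τ : Equiv.Perm (Fin n)} {f : Fin n → ℕ}
  (hf : ∀ i j, τ i < τ j ↔ f i < f j)
include hf

lemma covBy_of_forall_ne {a b : Fin n} (hab : f a + 2 = f b) (hgap : ∀ c, f c ≠ f a + 1) :
    τ a ⋖ τ b := by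
  refine ⟨(hf a b).2 (by omega), fun x hax hxb => ?_⟩
  rw [← τ.apply_symm_apply x, hf] at hax hxb
  exact hgap (τ.symm x) (by omega)

lemma val_apply_add_one_eq_of_forall_lt {t : Fin n} (ht : ∀ j, j ≠ t → f j < f t) :
    (τ t : ℕ) + 1 = n := by
  have hmax : ∀ x, x ≤ τ t := fun x => by
    rcases eq_or_ne (τ.symm x) t with h | h
    · rw [← h, τ.apply_symm_apply]
    · simpa using ((hf _ _).2 (ht _ h)).le
  have : n - 1 ≤ (τ t : ℕ) := hmax ⟨n - 1, by have := t.isLt; omega⟩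
  omega

lemma val_apply_eq_zero_of_forall_lt {t : Fin n} (ht : ∀ j, j ≠ t → f t < f j) :
    (τ t : ℕ) = 0 := by
  have hmin : ∀ x, τ t ≤ x := fun x => by
    rcases eq_or_ne (τ.symm x) t with h | h
    · rw [← h, τ.apply_symm_apply]
    · simpa using ((hf _ _).2 (ht _ h)).le
  have : (τ t : ℕ) ≤ 0 := hmin ⟨0, t.pos⟩
  omega

end RelativeOrder

def parallelAlternation (m q : ℕ) : ℕ := if q < m then 2 * q + 1 else 2 * (q - m)

def skipIndex (d i : ℕ) : ℕ := if i < d then i else i + 1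

lemma parallelAlternation_injective (m : ℕ) : Function.Injective (parallelAlternation m) := by
  intro p q h
  unfold parallelAlternation at h
  split_ifs at h <;> omega

lemma skipIndex_ne (d i : ℕ) : skipIndex d i ≠ d := by
  unfold skipIndex
  split_ifs <;> omega

section Deletion

variable {m : ℕ} {d : Fin (2 * m)} {τ : Equiv.Perm (Fin (2 * m - 1))}

lemma lt_iff_parallelAlternation_skipIndex (π : Equiv.Perm (Fin (2 * m)))
    (hπ : ∀ i : Fin (2 * m),
      ((i : ℕ) < m → (π i : ℕ) = 2 * (i : ℕ) + 1) ∧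
      (m ≤ (i : ℕ) → (π i : ℕ) = 2 * ((i : ℕ) - m)))
    (hτ : ∀ i j : Fin (2 * m - 1),
      τ i < τ j ↔
        π (if (i : ℕ) < (d : ℕ) then ⟨i, by omega⟩ else ⟨(i : ℕ) + 1, by omega⟩) <
        π (if (j : ℕ) < (d : ℕ) then ⟨j, by omega⟩ else ⟨(j : ℕ) + 1, by omega⟩))
    (i j : Fin (2 * m - 1)) :
    τ i < τ j ↔
      parallelAlternation m (skipIndex d i) < parallelAlternation m (skipIndex d j) := by
  have hval : ∀ k : Fin (2 * m - 1),
    (π (if (k : ℕ) < (d : ℕ) then ⟨k, by omega⟩ else ⟨(k : ℕ) + 1, by omega⟩) : ℕ) =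
      parallelAlternation m (skipIndex d k) := fun k => by
    unfold skipIndex
    split_ifs <;>
    · unfold parallelAlternation
      split_ifs with hkm
      exacts [(hπ _).1 hkm, (hπ _).2 (not_lt.1 hkm)]
  rw [hτ, Fin.lt_def, hval, hval]

variable (hf : ∀ i j, τ i < τ j ↔
  parallelAlternation m (skipIndex d i) < parallelAlternation m (skipIndex d j))
include hf

lemma not_isSimplePerm_of_adjacent (hm : 2 ≤ m) (a : Fin (2 * m - 1))
    (ha : (a : ℕ) + 1 < 2 * m - 1)
    (hlow : parallelAlternation m (skipIndex d a) + 1 = parallelAlternation m d)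
    (hhigh : parallelAlternation m (skipIndex d (a + 1)) = parallelAlternation m d + 1) :
    ¬ IsSimplePerm τ := by
  refine not_isSimplePerm_of_covBy (by omega) (b := ⟨a + 1, ha⟩)
    (Fin.covBy_iff.2 (Nat.covBy_iff_add_one_eq.2 rfl))
    (covBy_of_forall_ne hf (by simp only; omega) fun c => ?_)
  rw [hlow]
  exact fun h => skipIndex_ne d c (parallelAlternation_injective m h)

end Deletion

/-- For every m ≥ 2, every one-point deletion of the simple parallel alternation
2 4 6 ⋯ (2m) 1 3 5 ⋯ (2m−1) is not simple; i.e. this permutation is exceptional.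
Here τ is the pattern of π with the entry in position d removed. -/
theorem stmt17 (m : ℕ) (hm : 2 ≤ m) (π : Equiv.Perm (Fin (2 * m)))
    (hπ : ∀ i : Fin (2 * m),
      ((i : ℕ) < m → (π i : ℕ) = 2 * (i : ℕ) + 1) ∧
      (m ≤ (i : ℕ) → (π i : ℕ) = 2 * ((i : ℕ) - m)))
    (d : Fin (2 * m)) (τ : Equiv.Perm (Fin (2 * m - 1)))
    (hτ : ∀ i j : Fin (2 * m - 1),
      τ i < τ j ↔
        π (if (i : ℕ) < (d : ℕ) then ⟨i, by omega⟩ else ⟨(i : ℕ) + 1, by omega⟩) <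
        π (if (j : ℕ) < (d : ℕ) then ⟨j, by omega⟩ else ⟨(j : ℕ) + 1, by omega⟩)) :
    ¬ IsSimplePerm τ := by
  have hf := lt_iff_parallelAlternation_skipIndex π hπ hτ
  rcases (by omega : d + 1 < m ∨ d + 1 = m ∨ d = m ∨ m < d) with hd | hd | hd | hd
  · -- values `2d` and `2d + 2`, at positions `m + d` and `m + d + 1` of `π`
    refine not_isSimplePerm_of_adjacent hf hm ⟨m + d - 1, by omega⟩ (by simp only; omega)
      ?_ ?_ <;>
    · simp only [parallelAlternation, skipIndex]
      split_ifs <;> omega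
  · -- the maximum is deleted and the last entry of `π` is the second largest
    refine not_isSimplePerm_of_end (by omega) (t := ⟨2 * m - 2, by omega⟩)
      (Or.inr (by simp only; omega)) (Or.inr (val_apply_add_one_eq_of_forall_lt hf fun j hj => ?_))
    have := Fin.val_ne_of_ne hj
    simp only [parallelAlternation, skipIndex] at this ⊢
    split_ifs <;> omega
  · -- the minimum is deleted and the first entry of `π` is the second smallest
    refine not_isSimplePerm_of_end (by omega) (t := ⟨0, by omega⟩) (Or.inl rfl)
      (Or.inl (val_apply_eq_zero_of_forall_lt hf fun j hj => ?_))
    have := Fin.val_ne_of_ne hj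
    simp only [parallelAlternation, skipIndex] at this ⊢
    split_ifs <;> omega
  · -- values `2(d - m) - 1` and `2(d - m) + 1`, at positions `d - m - 1` and `d - m`
    refine not_isSimplePerm_of_adjacent hf hm ⟨d - m - 1, by omega⟩ (by simp only; omega)
      ?_ ?_ <;>
    · simp only [parallelAlternation, skipIndex]
      split_ifs <;> omega
end

section
/- Every even permutation class (downset under pattern containment) that is not partially well-ordered contains a fundamental antichain: an infinite antichain A whose downward closure contains no infinite antichain other than subsets of A. -/
/-- Permutations of arbitrary (finite) length. -/
abbrev PermSig : Type := Σ n : ℕ, Equiv.Perm (Fin n)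

/-- Pattern containment: `σ ≤ π` iff `π` has a subsequence order isomorphic to `σ`. -/
def PatLE (σ π : PermSig) : Prop :=
  ∃ f : Fin σ.1 → Fin π.1, StrictMono f ∧
    ∀ i j : Fin σ.1, σ.2 i < σ.2 j ↔ π.2 (f i) < π.2 (f j)

/-- The (downward) closure `Sub(A)` of a set of permutations. -/
def SubCl (A : Set PermSig) : Set PermSig := {σ | ∃ π ∈ A, PatLE σ π}

/-- A set of permutations is partially well-ordered if every infinite sequence in it
contains an increasing pair (equivalently, it has no infinite antichain and no
infinite strictly decreasing sequence). -/
def IsPwoClass (C : Set PermSig) : Prop :=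
  ∀ g : ℕ → PermSig, (∀ k, g k ∈ C) → ∃ i j : ℕ, i < j ∧ PatLE (g i) (g j)

/-!
Build the antichain greedily, in the manner of Nash-Williams' minimal bad sequence: at each
step add a minimal permutation which, together with the terms already chosen, still extends to
an infinite antichain of `C`. Pattern containment is well-founded since a proper pattern is
shorter. If an infinite antichain `B` below the resulting `A` had an element
`c ∉ A`, take `c ≤ aₘ` with `m` least. Then the terms before `aₘ` together with `B` form an
infinite antichain of `C` containing `c`, so `c` was a candidate at step `m`, and minimality of
`aₘ` forces `c = aₘ ∈ A`.
-/

lemma PatLE.refl (σ : PermSig) : PatLE σ σ := ⟨id, strictMono_id, fun _ _ => Iff.rfl⟩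

lemma PatLE.trans {σ π ρ : PermSig} (h₁ : PatLE σ π) (h₂ : PatLE π ρ) : PatLE σ ρ := by
  obtain ⟨f, hf, hσπ⟩ := h₁
  obtain ⟨g, hg, hπρ⟩ := h₂
  exact ⟨g ∘ f, hg.comp hf, fun i j => (hσπ i j).trans (hπρ (f i) (f j))⟩

lemma PatLE.fst_le {σ π : PermSig} (h : PatLE σ π) : σ.1 ≤ π.1 := by
  obtain ⟨f, hf, -⟩ := h
  simpa using Fintype.card_le_of_injective f hf.injective

lemma PatLE.eq_of_fst_le {σ π : PermSig} (h : PatLE σ π) (hπσ : π.1 ≤ σ.1) : σ = π := by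
  obtain ⟨n, s⟩ := σ
  obtain ⟨m, p⟩ := π
  obtain rfl : n = m := le_antisymm h.fst_le hπσ
  obtain ⟨f, hf, hsp⟩ := h
  obtain rfl : f = id := hf.eq_id
  have hmono : StrictMono (p ∘ s.symm) := fun x y hxy => by
    simpa using (hsp (s.symm x) (s.symm y)).1 (by simpa using hxy)
  obtain rfl : s = p := Equiv.ext fun i => by simpa using (congrFun hmono.eq_id (s i)).symm
  rfl

lemma PatLE.antisymm {σ π : PermSig} (h₁ : PatLE σ π) (h₂ : PatLE π σ) : σ = π :=
  h₁.eq_of_fst_le h₂.fst_le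

instance PermSig.patternOrder : PartialOrder PermSig where
  le := PatLE
  le_refl := PatLE.refl
  le_trans _ _ _ := PatLE.trans
  le_antisymm _ _ := PatLE.antisymm

lemma PermSig.strictMono_fst : StrictMono (Sigma.fst : PermSig → ℕ) := fun _ _ h =>
  h.1.fst_le.lt_of_ne fun hfst => h.ne (h.1.eq_of_fst_le hfst.ge)

instance PermSig.wellFoundedLT : WellFoundedLT PermSig := PermSig.strictMono_fst.wellFoundedLT

section FundamentalAntichain

variable {α : Type*}

theorem Set.exists_infinite_antichain_of_not_partiallyWellOrderedOn [Preorder α]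
    [WellFoundedLT α] {s : Set α} (h : ¬ s.PartiallyWellOrderedOn (· ≤ ·)) :
    ∃ t ⊆ s, t.Infinite ∧ IsAntichain (· ≤ ·) t := by
  have hs : ¬ WellQuasiOrderedLE s := fun h' => h h'.wqo
  rw [wellQuasiOrderedLE_iff] at hs
  push Not at hs
  obtain ⟨t, ht, htinf⟩ := hs inferInstance
  exact ⟨(↑) '' t, Subtype.coe_image_subset _ _, htinf.image Subtype.val_injective.injOn,
    ht.image _ fun _ _ => id⟩

variable [PartialOrder α]

def IsFundamentalAntichain (A : Set α) : Prop :=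
  A.Infinite ∧ IsAntichain (· ≤ ·) A ∧
    ∀ B ⊆ (lowerClosure A : Set α), B.Infinite → IsAntichain (· ≤ ·) B → B ⊆ A

lemma IsAntichain.union_of_subset_lowerClosure {A P B : Set α} (hA : IsAntichain (· ≤ ·) A)
    (hPA : P ⊆ A) (hB : IsAntichain (· ≤ ·) B) (hBA : B ⊆ lowerClosure A)
    (hBP : ∀ b ∈ B, ∀ p ∈ P, b ≤ p → b ∈ A) : IsAntichain (· ≤ ·) (P ∪ B) := by
  refine isAntichain_union.2
    ⟨hA.subset hPA, hB, fun p hp b hb hpb => ⟨fun hpb' => ?_, fun hbp => ?_⟩⟩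
  · obtain ⟨a, ha, hba⟩ := hBA hb
    obtain rfl : p = a := hA.eq (hPA hp) ha (hpb'.trans hba)
    exact hpb (hpb'.antisymm hba)
  · exact hpb (hA.eq (hBP b hb p hp hbp) (hPA hp) hbp).symm

def ExtendsToInfiniteAntichain (C S : Set α) : Prop :=
  ∃ T, S ⊆ T ∧ T ⊆ C ∧ T.Infinite ∧ IsAntichain (· ≤ ·) T

def extensionCandidates (C S : Set α) : Set α :=
  {x | x ∉ S ∧ ExtendsToInfiniteAntichain C (insert x S)}

lemma ExtendsToInfiniteAntichain.extensionCandidates_nonempty {C S : Set α}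
    (h : ExtendsToInfiniteAntichain C S) (hS : S.Finite) : (extensionCandidates C S).Nonempty := by
  obtain ⟨T, hST, hTC, hTinf, hT⟩ := h
  obtain ⟨x, hxT, hxS⟩ := (hTinf.sdiff hS).nonempty
  exact ⟨x, hxS, T, Set.insert_subset hxT hST, hTC, hTinf, hT⟩

section MinimalSeq

variable (C : Set α) [Nonempty α]

noncomputable def minimalExtension (S : Set α) : α :=
  Classical.epsilon (Minimal (· ∈ extensionCandidates C S))

noncomputable def minimalPrefix : ℕ → Set α
  | 0 => ∅
  | n + 1 => insert (minimalExtension C (minimalPrefix n)) (minimalPrefix n)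

noncomputable def minimalSeq (n : ℕ) : α := minimalExtension C (minimalPrefix C n)

variable {C}

lemma minimal_minimalExtension [WellFoundedLT α] {S : Set α}
    (h : ExtendsToInfiniteAntichain C S) (hS : S.Finite) :
    Minimal (· ∈ extensionCandidates C S) (minimalExtension C S) :=
  Classical.epsilon_spec (exists_minimal_of_wellFoundedLT _ (h.extensionCandidates_nonempty hS))

lemma minimalPrefix_eq_image (n : ℕ) : minimalPrefix C n = minimalSeq C '' Set.Iio n := by
  induction n with
  | zero => simp [minimalPrefix]
  | succ n ih =>
    rw [Set.Iio_add_one_eq_Iic, ← Set.Iio_insert, Set.image_insert_eq, ← ih]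
    rfl

lemma minimalPrefix_finite (n : ℕ) : (minimalPrefix C n).Finite := by
  induction n with
  | zero => exact Set.finite_empty
  | succ n ih => exact ih.insert _

variable [WellFoundedLT α]

lemma extendsToInfiniteAntichain_minimalPrefix (h : ExtendsToInfiniteAntichain C ∅) (n : ℕ) :
    ExtendsToInfiniteAntichain C (minimalPrefix C n) := by
  induction n with
  | zero => exact h
  | succ n ih => exact (minimal_minimalExtension ih (minimalPrefix_finite n)).1.2

lemma minimal_minimalSeq (h : ExtendsToInfiniteAntichain C ∅) (n : ℕ) :
    Minimal (· ∈ extensionCandidates C (minimalPrefix C n)) (minimalSeq C n) :=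
  minimal_minimalExtension (extendsToInfiniteAntichain_minimalPrefix h n) (minimalPrefix_finite n)

lemma range_minimalSeq_subset (h : ExtendsToInfiniteAntichain C ∅) :
    Set.range (minimalSeq C) ⊆ C := by
  rintro _ ⟨n, rfl⟩
  obtain ⟨T, hST, hTC, -⟩ := extendsToInfiniteAntichain_minimalPrefix h (n + 1)
  exact hTC (hST (Set.mem_insert _ _))

lemma minimalSeq_injective (h : ExtendsToInfiniteAntichain C ∅) :
    Function.Injective (minimalSeq C) :=
  .of_lt_imp_ne fun _ j hij heq => (minimal_minimalSeq h j).1.1 <| by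
    rw [minimalPrefix_eq_image, ← heq]
    exact Set.mem_image_of_mem _ hij

lemma isAntichain_range_minimalSeq (h : ExtendsToInfiniteAntichain C ∅) :
    IsAntichain (· ≤ ·) (Set.range (minimalSeq C)) := by
  rintro _ ⟨i, rfl⟩ _ ⟨j, rfl⟩
  obtain ⟨T, hST, -, -, hT⟩ := extendsToInfiniteAntichain_minimalPrefix h (max i j + 1)
  rw [minimalPrefix_eq_image] at hST
  exact hT (hST (Set.mem_image_of_mem _ (Nat.lt_succ_of_le (le_max_left i j))))
    (hST (Set.mem_image_of_mem _ (Nat.lt_succ_of_le (le_max_right i j))))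

theorem subset_range_minimalSeq (hC : IsLowerSet C) (h : ExtendsToInfiniteAntichain C ∅)
    {B : Set α} (hBA : B ⊆ lowerClosure (Set.range (minimalSeq C))) (hBinf : B.Infinite)
    (hB : IsAntichain (· ≤ ·) B) : B ⊆ Set.range (minimalSeq C) := by
  classical
  set A := Set.range (minimalSeq C)
  have hAC : A ⊆ C := range_minimalSeq_subset h
  intro b hb
  by_contra hbA
  have hex : ∃ m, ∃ c ∈ B, c ∉ A ∧ c ≤ minimalSeq C m := by
    obtain ⟨_, ⟨m, rfl⟩, hbm⟩ := hBA hb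
    exact ⟨m, b, hb, hbA, hbm⟩
  obtain ⟨c, hc, hcA, hcm⟩ := Nat.find_spec hex
  set m := Nat.find hex
  have hPA : minimalPrefix C m ⊆ A := by
    rw [minimalPrefix_eq_image]
    exact Set.image_subset_range _ _
  have hBP : ∀ b ∈ B, ∀ p ∈ minimalPrefix C m, b ≤ p → b ∈ A := by
    intro b hb p hp hbp
    by_contra hbA
    rw [minimalPrefix_eq_image] at hp
    obtain ⟨j, hj, rfl⟩ := hp
    exact Nat.find_min hex hj ⟨b, hb, hbA, hbp⟩
  have hBC : B ⊆ C := fun x hx => by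
    obtain ⟨a, ha, hxa⟩ := hBA hx
    exact hC hxa (hAC ha)
  have hcand : c ∈ extensionCandidates C (minimalPrefix C m) :=
    ⟨fun hcm => hcA (hPA hcm), minimalPrefix C m ∪ B,
      Set.insert_subset (Or.inr hc) Set.subset_union_left,
      Set.union_subset (hPA.trans hAC) hBC, hBinf.mono Set.subset_union_right,
      (isAntichain_range_minimalSeq h).union_of_subset_lowerClosure hPA hB hBA hBP⟩
  exact hcA ((minimal_minimalSeq h m).eq_of_le hcand hcm ▸ ⟨m, rfl⟩)

end MinimalSeq

theorem IsLowerSet.exists_isFundamentalAntichain [WellFoundedLT α] {C : Set α}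
    (hC : IsLowerSet C) (hT : ∃ T ⊆ C, T.Infinite ∧ IsAntichain (· ≤ ·) T) :
    ∃ A ⊆ C, IsFundamentalAntichain A := by
  obtain ⟨T, hTC, hTinf, hT⟩ := hT
  have : Nonempty α := hTinf.nonempty.to_subtype.map (↑)
  have h : ExtendsToInfiniteAntichain C ∅ := ⟨T, Set.empty_subset T, hTC, hTinf, hT⟩
  exact ⟨_, range_minimalSeq_subset h, Set.infinite_range_of_injective (minimalSeq_injective h),
    isAntichain_range_minimalSeq h, fun _ => subset_range_minimalSeq hC h⟩

end FundamentalAntichain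

/-- Every permutation class (downset under pattern containment) that is not partially
well-ordered contains a fundamental antichain: an infinite antichain `A` such that every
infinite antichain contained in the closure `Sub(A)` is a subset of `A`. -/
theorem stmt19 (C : Set PermSig) (hC : ∀ σ π : PermSig, PatLE σ π → π ∈ C → σ ∈ C)
    (hnpwo : ¬ IsPwoClass C) :
    ∃ A : Set PermSig, A ⊆ C ∧ A.Infinite ∧ IsAntichain PatLE A ∧
      ∀ B : Set PermSig, B ⊆ SubCl A → B.Infinite → IsAntichain PatLE B → B ⊆ A := by
  have hnpwo' : ¬ C.PartiallyWellOrderedOn (· ≤ ·) := fun h => hnpwo fun _ hg => h.exists_lt hg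
  exact IsLowerSet.exists_isFundamentalAntichain (fun _ _ hle hmem => hC _ _ hle hmem)
    (Set.exists_infinite_antichain_of_not_partiallyWellOrderedOn hnpwo')
end
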